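/- For the complete 3-uniform hypergraph on 5 vertices, the inequality χ^c(G,k,r,p) ≥ log_r χ(G,p) is not an equality up to rounding: ⌈log_3 χ(K_5^3,3)⌉ = 2 while χ^c(K_5^3,3,3,3) = 3; in particular ⌈log_3 χ(K_5^3,3)⌉ < χ^c(K_5^3,3,3,3). (Here χ(K_5^3,3) ≤ 5, since coloring all 5 vertices with distinct colors is a 3-strong coloring.) -/
import Mathlib


open Finset

/-- `E` (the hyperedge set of a hypergraph on vertex set `V`) has a strong `(r,p)` cover of
size `t`: there are `t` `r`-colorings of `V` such that every hyperedge receives at least `p`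
distinct colors in at least one of them. -/
def HasStrongCover {V : Type*} [DecidableEq V] (E : Finset (Finset V)) (r p t : ℕ) : Prop :=
  ∃ χ : Fin t → V → Fin r, ∀ e ∈ E, ∃ i, p ≤ (e.image (χ i)).card

/-- The strong `(r,p)` cover number: minimum size of a strong `(r,p)` cover. -/
noncomputable def coverNumber {V : Type*} [DecidableEq V] (E : Finset (Finset V)) (r p : ℕ) : ℕ :=
  sInf {t | HasStrongCover E r p t}

/-- The `p`-strong chromatic number: the least number `q` of colors admitting a coloring in
which every hyperedge receives at least `min p |e|` distinct colors. -/
noncomputable def strongChromaticNumber {V : Type*} [DecidableEq V]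
    (E : Finset (Finset V)) (p : ℕ) : ℕ :=
  sInf {q | ∃ c : V → Fin q, ∀ e ∈ E, min p e.card ≤ (e.image c).card}

/-- The complete `k`-uniform hypergraph on `Fin n`: all `k`-element subsets of the vertices. -/
def completeEdges (n k : ℕ) : Finset (Finset (Fin n)) :=
  Finset.powersetCard k (Finset.univ : Finset (Fin n))

set_option maxRecDepth 10000 in
lemma aux_filter_le (c : Fin 5 → Fin 3) :
    ((completeEdges 5 3).filter (fun e => 3 ≤ (e.image c).card)).card ≤ 4 := by
  revert c; decide

lemma aux_Ecard : (completeEdges 5 3).card = 10 := by decide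

lemma aux_no_small_cover {t : ℕ} (ht : t ≤ 2) : ¬ HasStrongCover (completeEdges 5 3) 3 3 t := by
  rintro ⟨χ, h⟩
  have hsub : completeEdges 5 3 ⊆
      Finset.univ.biUnion (fun i : Fin t =>
        (completeEdges 5 3).filter (fun e => 3 ≤ (e.image (χ i)).card)) := by
    intro e he
    obtain ⟨i, hi⟩ := h e he
    exact Finset.mem_biUnion.mpr ⟨i, Finset.mem_univ i, Finset.mem_filter.mpr ⟨he, hi⟩⟩
  have h1 : (completeEdges 5 3).card ≤
      ∑ i : Fin t, ((completeEdges 5 3).filter (fun e => 3 ≤ (e.image (χ i)).card)).card :=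
    le_trans (Finset.card_le_card hsub) (Finset.card_biUnion_le)
  have h2 : ∑ i : Fin t, ((completeEdges 5 3).filter
      (fun e => 3 ≤ (e.image (χ i)).card)).card ≤ ∑ _i : Fin t, 4 :=
    Finset.sum_le_sum fun i _ => aux_filter_le (χ i)
  simp only [Finset.sum_const, Finset.card_univ, Fintype.card_fin, smul_eq_mul, aux_Ecard] at h1 h2
  omega

set_option maxRecDepth 4000 in
lemma aux_cover3 : HasStrongCover (completeEdges 5 3) 3 3 3 := by
  refine ⟨![![0, 0, 0, 1, 2], ![0, 0, 1, 2, 2], ![0, 1, 2, 2, 2]], ?_⟩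
  decide

lemma aux_coverNumber : coverNumber (completeEdges 5 3) 3 3 = 3 := by
  refine le_antisymm (Nat.sInf_le aux_cover3) (le_csInf ⟨3, aux_cover3⟩ ?_)
  intro t ht
  by_contra h
  exact aux_no_small_cover (by omega) ht

set_option maxRecDepth 4000 in
lemma aux_chrom5_mem :
    ∃ c : Fin 5 → Fin 5, ∀ e ∈ completeEdges 5 3, min 3 e.card ≤ (e.image c).card :=
  ⟨id, by decide⟩

lemma aux_chrom5 : strongChromaticNumber (completeEdges 5 3) 3 = 5 := by
  refine le_antisymm (Nat.sInf_le aux_chrom5_mem) (le_csInf ⟨5, aux_chrom5_mem⟩ ?_)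
  rintro q ⟨c, hc⟩
  have hinj : Function.Injective c := by
    intro x y hxy
    by_contra hne
    have hcard2 : ({x, y} : Finset (Fin 5)).card = 2 := Finset.card_pair hne
    obtain ⟨z, hz⟩ : (({x, y} : Finset (Fin 5))ᶜ).Nonempty := by
      rw [← Finset.card_pos, Finset.card_compl, hcard2]
      simp
    rw [Finset.mem_compl, Finset.mem_insert, Finset.mem_singleton, not_or] at hz
    have hzx : z ≠ x := hz.1
    have hzy : z ≠ y := hz.2
    have hcard3 : ({x, y, z} : Finset (Fin 5)).card = 3 :=
      Finset.card_eq_three.mpr ⟨x, y, z, hne, (Ne.symm hzx), (Ne.symm hzy), rfl⟩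
    have he : ({x, y, z} : Finset (Fin 5)) ∈ completeEdges 5 3 :=
      Finset.mem_powersetCard.mpr ⟨Finset.subset_univ _, hcard3⟩
    have h3 := hc _ he
    rw [hcard3] at h3
    have himg : ({x, y, z} : Finset (Fin 5)).image c ⊆ {c x, c z} := by
      intro w hw
      simp only [Finset.mem_image, Finset.mem_insert, Finset.mem_singleton] at hw ⊢
      obtain ⟨v, hv, rfl⟩ := hw
      rcases hv with rfl | rfl | rfl
      · exact Or.inl rfl
      · exact Or.inl hxy.symm
      · exact Or.inr rfl
    have hle : (({x, y, z} : Finset (Fin 5)).image c).card ≤ 2 :=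
      le_trans (Finset.card_le_card himg) (Finset.card_insert_le _ _ |>.trans (by simp))
    omega
  have := Fintype.card_le_of_injective c hinj
  simpa using this

lemma aux_logb : ⌈Real.logb 3 (5 : ℝ)⌉ = 2 := by
  have h9 : Real.logb 3 (9 : ℝ) = 2 := by
    rw [show (9 : ℝ) = 3 ^ (2 : ℕ) by norm_num, Real.logb_pow, Real.logb_self_eq_one] <;>
      norm_num
  rw [Int.ceil_eq_iff]
  constructor
  · have h3 : Real.logb 3 (3 : ℝ) = 1 := Real.logb_self_eq_one (by norm_num)
    have := Real.logb_lt_logb (b := 3) (by norm_num) (by norm_num : (0:ℝ) < 3)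
      (by norm_num : (3:ℝ) < 5)
    push_cast
    linarith [h3 ▸ this]
  · have := Real.logb_le_logb_of_le (b := 3) (by norm_num) (by norm_num) (by norm_num : (5:ℝ) ≤ 9)
    push_cast
    linarith [h9 ▸ this]

theorem stmt14 :
    strongChromaticNumber (completeEdges 5 3) 3 ≤ 5 ∧
    ⌈Real.logb 3 (strongChromaticNumber (completeEdges 5 3) 3 : ℝ)⌉ = 2 ∧
    coverNumber (completeEdges 5 3) 3 3 = 3 ∧
    ⌈Real.logb 3 (strongChromaticNumber (completeEdges 5 3) 3 : ℝ)⌉ <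
      (coverNumber (completeEdges 5 3) 3 3 : ℤ) := by
  rw [aux_chrom5, aux_coverNumber]
  refine ⟨le_refl 5, ?_, rfl, ?_⟩
  · exact_mod_cast aux_logb
  · rw [show ((5:ℕ):ℝ) = (5:ℝ) by norm_cast, aux_logb]; norm_num
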